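/- arXiv:2103.07692 — 5 statements merged into one kernel-verified Lean document; each statement's English description precedes it below -/
import Mathlib

section
/- Let 0 < λ < 1, 1/2 ≤ α < 1, β ≥ 0 be real numbers and m ≥ 2 a natural number. Let G be a simple graph on a finite vertex set V with |V| = p, and suppose G is hereditarily edge λ-separable with parameters α, β, m: for every subset S ⊆ V with |S| ≥ m there exists a partition of S into two disjoint sets S₁, S₂ such that |S₁| ≤ α|S|, |S₂| ≤ α|S|, and the number of edges of G with one endpoint in S₁ and the other in S₂ is at most β·|S|^λ. Then for every natural number r with r ≥ m − 1 there exists a partition of V into parts each of cardinality at most r such that the total number of edges of G whose two endpoints lie in different parts is at most (β / (α^λ · (1 − α^{1−λ}))) · p · r^{λ−1}. -/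
set_option maxHeartbeats 2000000


/-- Lemma on `r^λ`-partitions: a hereditarily edge `λ`-separable graph (with parameters
`α`, `β`, `m`) on `p` vertices admits, for every `r ≥ m − 1`, a partition of its vertex
set into parts of size at most `r` such that the number of edges joining different parts
is at most `(β / (α^λ · (1 − α^{1−λ}))) · p · r^{λ−1}`. -/
theorem rLambda_partition {V : Type*} [Fintype V] [DecidableEq V] (G : SimpleGraph V)
    (lam α β : ℝ) (m : ℕ)
    (hlam0 : 0 < lam) (hlam1 : lam < 1)
    (hα : 1 / 2 ≤ α) (hα1 : α < 1) (hβ : 0 ≤ β) (hm : 2 ≤ m)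
    (p : ℕ) (hp : Fintype.card V = p)
    (hsep : ∀ S : Finset V, m ≤ S.card →
      ∃ S₁ S₂ : Finset V, Disjoint S₁ S₂ ∧ S₁ ∪ S₂ = S ∧
        (S₁.card : ℝ) ≤ α * S.card ∧ (S₂.card : ℝ) ≤ α * S.card ∧
        (({e ∈ G.edgeSet | ∃ u ∈ S₁, ∃ v ∈ S₂, e = s(u, v)}.ncard : ℝ) ≤
          β * (S.card : ℝ) ^ lam)) :
    ∀ r : ℕ, m - 1 ≤ r →
      ∃ P : Finpartition (Finset.univ : Finset V),
        (∀ part ∈ P.parts, part.card ≤ r) ∧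
        (({e ∈ G.edgeSet | ∀ part ∈ P.parts, ¬ (∀ x ∈ e, x ∈ part)}.ncard : ℝ) ≤
          β / (α ^ lam * (1 - α ^ (1 - lam))) * p * (r : ℝ) ^ (lam - 1)) := by
  intro r hr
  have hα0 : (0:ℝ) < α := by linarith
  have hr1 : 1 ≤ r := by omega
  have hr0 : (0:ℝ) < (r:ℝ) := by exact_mod_cast hr1
  set q : ℝ := α ^ (1 - lam) with hq
  have hq0 : 0 < q := Real.rpow_pos_of_pos hα0 _
  have hq1 : q < 1 := Real.rpow_lt_one hα0.le hα1 (by linarith)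
  set B : ℝ := β / (1 - q) with hB
  have hB0 : 0 ≤ B := div_nonneg hβ (by linarith)
  set R : ℝ := (r:ℝ) ^ (lam - 1) with hR
  have hR0 : 0 < R := Real.rpow_pos_of_pos hr0 _
  have hBq : B * (1 - q) = β := by
    have hne : (1:ℝ) - q ≠ 0 := by linarith
    rw [hB]; field_simp
  -- key analytic fact
  have key : ∀ (k : ℕ) (s : ℝ), 0 < s → (r:ℝ) < s * α ^ k →
      s ^ (lam - 1) ≤ R * q ^ k := by
    intro k s hs hlt
    have hαk : (0:ℝ) < α ^ k := pow_pos hα0 k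
    have h1 : (r:ℝ) ^ (1 - lam) ≤ (s * α ^ k) ^ (1 - lam) :=
      Real.rpow_le_rpow hr0.le hlt.le (by linarith)
    rw [Real.mul_rpow hs.le hαk.le] at h1
    have hak : ((α:ℝ) ^ k) ^ (1 - lam) = q ^ k := by
      rw [← Real.rpow_natCast α k, ← Real.rpow_mul hα0.le, mul_comm, hq,
        Real.rpow_mul hα0.le, Real.rpow_natCast]
    rw [hak] at h1
    have hsp : 0 < s ^ (1 - lam) := Real.rpow_pos_of_pos hs _
    have hrp : 0 < (r:ℝ) ^ (1 - lam) := Real.rpow_pos_of_pos hr0 _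
    have hqk : 0 < q ^ k := pow_pos hq0 k
    have hs1 : s ^ (lam - 1) = (s ^ (1 - lam))⁻¹ := by
      rw [show lam - 1 = -(1 - lam) by ring, Real.rpow_neg hs.le]
    have hr1' : R = (((r:ℝ)) ^ (1 - lam))⁻¹ := by
      rw [hR, show lam - 1 = -(1 - lam) by ring, Real.rpow_neg hr0.le]
    rw [hs1, hr1', inv_mul_eq_div, le_div_iff₀ hrp, inv_mul_eq_div, div_le_iff₀ hsp]
    nlinarith
  -- main recursive construction
  have main : ∀ (n : ℕ) (S : Finset V), S.card ≤ n →
      ∃ (P : Finset (Finset V)) (k : Finset V → ℕ),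
        (∀ T ∈ P, T.Nonempty ∧ T.card ≤ r ∧ T ⊆ S) ∧
        P.biUnion id = S ∧
        (↑P : Set (Finset V)).PairwiseDisjoint id ∧
        (∀ T ∈ P, k T = 0 ∨ (r:ℝ) * α < (S.card:ℝ) * α ^ (k T)) ∧
        (({e ∈ G.edgeSet | (∀ x ∈ e, x ∈ S) ∧ ∀ T ∈ P, ¬ (∀ x ∈ e, x ∈ T)}.ncard : ℝ)
          ≤ B * R * ∑ T ∈ P, (T.card : ℝ) * (1 - q ^ (k T))) := by
    intro n
    induction n using Nat.strong_induction_on with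
    | _ n ih =>
      intro S hSn
      by_cases hsmall : S.card ≤ r
      · -- base case: S itself is a part (or nothing if empty)
        by_cases hSe : S = ∅
        · refine ⟨∅, fun _ => 0, by simp, by simp [hSe], by simp, by simp, ?_⟩
          have : {e : Sym2 V | e ∈ G.edgeSet ∧ (∀ x ∈ e, x ∈ S) ∧
              ∀ T ∈ (∅ : Finset (Finset V)), ¬ (∀ x ∈ e, x ∈ T)} = ∅ := by
            apply Set.eq_empty_iff_forall_notMem.mpr
            intro e
            induction e using Sym2.ind with
            | _ u v =>
              rintro ⟨-, h1, -⟩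
              have := h1 u (by simp)
              simp [hSe] at this
          rw [this]
          simp
        · refine ⟨{S}, fun _ => 0, ?_, by simp, by simp, by simp, ?_⟩
          · intro T hT
            rw [Finset.mem_singleton] at hT
            subst hT
            exact ⟨Finset.nonempty_iff_ne_empty.mpr hSe, hsmall, le_refl _⟩
          · have : {e : Sym2 V | e ∈ G.edgeSet ∧ (∀ x ∈ e, x ∈ S) ∧
                ∀ T ∈ ({S} : Finset (Finset V)), ¬ (∀ x ∈ e, x ∈ T)} = ∅ := by
              apply Set.eq_empty_iff_forall_notMem.mpr
              rintro e ⟨-, h1, h2⟩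
              exact h2 S (Finset.mem_singleton_self S) h1
            rw [this]
            simp
      · -- recursive case
        push_neg at hsmall
        have hmS : m ≤ S.card := by omega
        have hs0 : (0:ℝ) < (S.card:ℝ) := by
          have : 0 < S.card := by omega
          exact_mod_cast this
        obtain ⟨S₁, S₂, hdisj, hunion, hc1, hc2, hcut⟩ := hsep S hmS
        have hn1 : 1 ≤ n := by omega
        have hS1lt : S₁.card < S.card := by
          have : (S₁.card:ℝ) < (S.card:ℝ) := lt_of_le_of_lt hc1 (by nlinarith)
          exact_mod_cast this
        have hS2lt : S₂.card < S.card := by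
          have : (S₂.card:ℝ) < (S.card:ℝ) := lt_of_le_of_lt hc2 (by nlinarith)
          exact_mod_cast this
        obtain ⟨P₁, k₁, hparts₁, hbU₁, hdisjP₁, hinv₁, hcut₁⟩ :=
          ih (n-1) (by omega) S₁ (by omega)
        obtain ⟨P₂, k₂, hparts₂, hbU₂, hdisjP₂, hinv₂, hcut₂⟩ :=
          ih (n-1) (by omega) S₂ (by omega)
        have hP12 : Disjoint P₁ P₂ := by
          rw [Finset.disjoint_left]
          intro T hT1 hT2
          obtain ⟨⟨x, hx⟩, -, hsub1⟩ := hparts₁ T hT1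
          obtain ⟨-, -, hsub2⟩ := hparts₂ T hT2
          exact (Finset.disjoint_left.mp hdisj (hsub1 hx)) (hsub2 hx)
        set kf : Finset V → ℕ := fun T => (if T ∈ P₁ then k₁ T else k₂ T) + 1 with hkf
        refine ⟨P₁ ∪ P₂, kf, ?_, ?_, ?_, ?_, ?_⟩
        · intro T hT
          rcases Finset.mem_union.mp hT with h | h
          · obtain ⟨h1, h2, h3⟩ := hparts₁ T h
            exact ⟨h1, h2, h3.trans (hunion ▸ Finset.subset_union_left)⟩
          · obtain ⟨h1, h2, h3⟩ := hparts₂ T h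
            exact ⟨h1, h2, h3.trans (hunion ▸ Finset.subset_union_right)⟩
        · ext x
          simp only [Finset.mem_biUnion, Finset.mem_union, id]
          constructor
          · rintro ⟨T, hT | hT, hx⟩
            · exact (hunion ▸ Finset.subset_union_left) (hbU₁ ▸ Finset.mem_biUnion.mpr ⟨T, hT, hx⟩)
            · exact (hunion ▸ Finset.subset_union_right) (hbU₂ ▸ Finset.mem_biUnion.mpr ⟨T, hT, hx⟩)
          · intro hx
            rcases Finset.mem_union.mp (hunion ▸ hx) with h | h
            · obtain ⟨T, hT, hxT⟩ := Finset.mem_biUnion.mp (hbU₁ ▸ h)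
              exact ⟨T, Or.inl hT, hxT⟩
            · obtain ⟨T, hT, hxT⟩ := Finset.mem_biUnion.mp (hbU₂ ▸ h)
              exact ⟨T, Or.inr hT, hxT⟩
        · intro T₁ hT₁ T₂ hT₂ hne
          simp only [Finset.coe_union, Set.mem_union, Finset.mem_coe] at hT₁ hT₂
          rcases hT₁ with h1 | h1 <;> rcases hT₂ with h2 | h2
          · exact hdisjP₁ h1 h2 hne
          · exact Disjoint.mono (hparts₁ T₁ h1).2.2 (hparts₂ T₂ h2).2.2 hdisj
          · exact Disjoint.mono (hparts₂ T₁ h1).2.2 (hparts₁ T₂ h2).2.2 hdisj.symm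
          · exact hdisjP₂ h1 h2 hne
        · -- invariant
          intro T hT
          right
          have hstep : ∀ (S' : Finset V) (k' : Finset V → ℕ),
              (S'.card : ℝ) ≤ α * S.card →
              (k' T = 0 ∨ (r:ℝ) * α < (S'.card:ℝ) * α ^ (k' T)) →
              (r:ℝ) * α < (S.card:ℝ) * α ^ (k' T + 1) := by
            intro S' k' hle hOr
            rcases hOr with h0 | hlt
            · rw [h0]
              have : (r:ℝ) < (S.card:ℝ) := by exact_mod_cast hsmall
              simpa using by nlinarith
            · have hαk : (0:ℝ) < α ^ (k' T) := pow_pos hα0 _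
              have : (S'.card:ℝ) * α ^ (k' T) ≤ (α * S.card) * α ^ (k' T) :=
                mul_le_mul_of_nonneg_right hle hαk.le
              rw [pow_succ]
              nlinarith
          rcases Finset.mem_union.mp hT with h | h
          · have := hstep S₁ k₁ hc1 (hinv₁ T h)
            simpa [hkf, h] using this
          · have hT1 : T ∉ P₁ := Finset.disjoint_right.mp hP12 h
            have := hstep S₂ k₂ hc2 (hinv₂ T h)
            simpa [hkf, hT1] using this
        · -- the edge-count bound
          set E0 : Set (Sym2 V) :=
            {e ∈ G.edgeSet | ∃ u ∈ S₁, ∃ v ∈ S₂, e = s(u, v)} with hE0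
          set E1 : Set (Sym2 V) :=
            {e ∈ G.edgeSet | (∀ x ∈ e, x ∈ S₁) ∧ ∀ T ∈ P₁, ¬ (∀ x ∈ e, x ∈ T)} with hE1
          set E2 : Set (Sym2 V) :=
            {e ∈ G.edgeSet | (∀ x ∈ e, x ∈ S₂) ∧ ∀ T ∈ P₂, ¬ (∀ x ∈ e, x ∈ T)} with hE2
          have hsub : {e ∈ G.edgeSet | (∀ x ∈ e, x ∈ S) ∧
              ∀ T ∈ P₁ ∪ P₂, ¬ (∀ x ∈ e, x ∈ T)} ⊆ E0 ∪ E1 ∪ E2 := by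
            intro e
            induction e using Sym2.ind with
            | _ u v =>
              rintro ⟨he, hin, hnot⟩
              have hu : u ∈ S := hin u (by simp)
              have hv : v ∈ S := hin v (by simp)
              have hmem : ∀ x, x ∈ S → x ∈ S₁ ∨ x ∈ S₂ := by
                intro x hx
                exact Finset.mem_union.mp (hunion ▸ hx)
              rcases hmem u hu with hu1 | hu2 <;> rcases hmem v hv with hv1 | hv2
              · left; right
                refine ⟨he, ?_, ?_⟩
                · intro x hx
                  rcases Sym2.mem_iff.mp hx with rfl | rfl
                  · exact hu1
                  · exact hv1
                · intro T hT
                  exact hnot T (Finset.mem_union_left _ hT)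
              · left; left
                exact ⟨he, u, hu1, v, hv2, rfl⟩
              · left; left
                exact ⟨he, v, hv1, u, hu2, Sym2.eq_swap⟩
              · right
                refine ⟨he, ?_, ?_⟩
                · intro x hx
                  rcases Sym2.mem_iff.mp hx with rfl | rfl
                  · exact hu2
                  · exact hv2
                · intro T hT
                  exact hnot T (Finset.mem_union_right _ hT)
          have hncard : ({e ∈ G.edgeSet | (∀ x ∈ e, x ∈ S) ∧
              ∀ T ∈ P₁ ∪ P₂, ¬ (∀ x ∈ e, x ∈ T)}.ncard : ℝ)
              ≤ (E0.ncard : ℝ) + (E1.ncard : ℝ) + (E2.ncard : ℝ) := by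
            have h1 := Set.ncard_le_ncard hsub (Set.toFinite _)
            have h2 := Set.ncard_union_le (E0 ∪ E1) E2
            have h3 := Set.ncard_union_le E0 E1
            have h4 : {e ∈ G.edgeSet | (∀ x ∈ e, x ∈ S) ∧
                ∀ T ∈ P₁ ∪ P₂, ¬ (∀ x ∈ e, x ∈ T)}.ncard
                ≤ E0.ncard + E1.ncard + E2.ncard := by omega
            push_cast
            exact_mod_cast h4
          -- per-part key inequalities
          have hkeyP : ∀ (Pi : Finset (Finset V)) (ki : Finset V → ℕ) (Si : Finset V),
              (Si.card : ℝ) ≤ α * S.card →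
              (∀ T ∈ Pi, ki T = 0 ∨ (r:ℝ) * α < (Si.card:ℝ) * α ^ (ki T)) →
              ∀ T ∈ Pi, (S.card:ℝ) ^ (lam - 1) ≤ R * q ^ (ki T) := by
            intro Pi ki Si hle hinv T hT
            apply key
            · exact hs0
            · rcases hinv T hT with h0 | hlt
              · rw [h0]
                simpa using (by exact_mod_cast hsmall : (r:ℝ) < (S.card:ℝ))
              · have hαk : (0:ℝ) < α ^ (ki T) := pow_pos hα0 _
                have h2 : (Si.card:ℝ) * α ^ (ki T) ≤ (α * S.card) * α ^ (ki T) :=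
                  mul_le_mul_of_nonneg_right hle hαk.le
                have h3 : (r:ℝ) * α < ((S.card:ℝ) * α ^ (ki T)) * α := by nlinarith
                exact lt_of_mul_lt_mul_right h3 hα0.le
          have hkey₁ := hkeyP P₁ k₁ S₁ hc1 hinv₁
          have hkey₂ := hkeyP P₂ k₂ S₂ hc2 hinv₂
          -- cardinality sums
          have hsum₁ : ∑ T ∈ P₁, (T.card : ℝ) = (S₁.card : ℝ) := by
            rw [← hbU₁, Finset.card_biUnion (fun x hx y hy hxy => hdisjP₁ hx hy hxy)]
            push_cast
            rfl
          have hsum₂ : ∑ T ∈ P₂, (T.card : ℝ) = (S₂.card : ℝ) := by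
            rw [← hbU₂, Finset.card_biUnion (fun x hx y hy hxy => hdisjP₂ hx hy hxy)]
            push_cast
            rfl
          have hcards : (S.card : ℝ) = ∑ T ∈ P₁, (T.card : ℝ) + ∑ T ∈ P₂, (T.card : ℝ) := by
            rw [hsum₁, hsum₂, ← hunion]
            rw [Finset.card_union_of_disjoint hdisj]
            push_cast
            ring
          set A₁ := ∑ T ∈ P₁, (T.card : ℝ) * (1 - q ^ (k₁ T)) with hA₁
          set A₂ := ∑ T ∈ P₂, (T.card : ℝ) * (1 - q ^ (k₂ T)) with hA₂
          set C₁ := ∑ T ∈ P₁, (T.card : ℝ) * q ^ (k₁ T) with hC₁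
          set C₂ := ∑ T ∈ P₂, (T.card : ℝ) * q ^ (k₂ T) with hC₂
          have hsplit : ∑ T ∈ P₁ ∪ P₂, (T.card : ℝ) * (1 - q ^ (kf T))
              = (A₁ + A₂) + (1 - q) * (C₁ + C₂) := by
            rw [Finset.sum_union hP12]
            have e₁ : ∑ T ∈ P₁, (T.card : ℝ) * (1 - q ^ (kf T))
                = ∑ T ∈ P₁, ((T.card:ℝ) * (1 - q ^ (k₁ T)) + (1-q) * ((T.card:ℝ) * q ^ (k₁ T))) := by
              apply Finset.sum_congr rfl
              intro T hT
              have : kf T = k₁ T + 1 := by simp [hkf, hT]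
              rw [this, pow_succ]
              ring
            have e₂ : ∑ T ∈ P₂, (T.card : ℝ) * (1 - q ^ (kf T))
                = ∑ T ∈ P₂, ((T.card:ℝ) * (1 - q ^ (k₂ T)) + (1-q) * ((T.card:ℝ) * q ^ (k₂ T))) := by
              apply Finset.sum_congr rfl
              intro T hT
              have hT1 : T ∉ P₁ := Finset.disjoint_right.mp hP12 hT
              have : kf T = k₂ T + 1 := by simp [hkf, hT1]
              rw [this, pow_succ]
              ring
            rw [e₁, e₂, Finset.sum_add_distrib, Finset.sum_add_distrib,
              ← Finset.mul_sum, ← Finset.mul_sum, hA₁, hA₂, hC₁, hC₂]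
            ring
          -- the separator charge fits
          have hsml : (S.card:ℝ) ^ lam = (S.card:ℝ) ^ (lam - 1) * (S.card:ℝ) := by
            rw [show lam = lam - 1 + 1 by ring, Real.rpow_add_one hs0.ne']
            ring_nf
          have hchg : β * (S.card:ℝ) ^ lam ≤ β * R * (C₁ + C₂) := by
            have h₁ : ∑ T ∈ P₁, (T.card:ℝ) * (S.card:ℝ) ^ (lam - 1)
                ≤ ∑ T ∈ P₁, (T.card:ℝ) * (R * q ^ (k₁ T)) :=
              Finset.sum_le_sum fun T hT =>
                mul_le_mul_of_nonneg_left (hkey₁ T hT) (Nat.cast_nonneg _)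
            have h₂ : ∑ T ∈ P₂, (T.card:ℝ) * (S.card:ℝ) ^ (lam - 1)
                ≤ ∑ T ∈ P₂, (T.card:ℝ) * (R * q ^ (k₂ T)) :=
              Finset.sum_le_sum fun T hT =>
                mul_le_mul_of_nonneg_left (hkey₂ T hT) (Nat.cast_nonneg _)
            have hmulsum : ∀ (Pi : Finset (Finset V)) (ki : Finset V → ℕ),
                ∑ T ∈ Pi, (T.card:ℝ) * (R * q ^ (ki T))
                  = R * ∑ T ∈ Pi, (T.card:ℝ) * q ^ (ki T) := by
              intro Pi ki
              rw [Finset.mul_sum]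
              apply Finset.sum_congr rfl
              intros
              ring
            calc β * (S.card:ℝ) ^ lam
                = β * ((S.card:ℝ) ^ (lam - 1) * (S.card:ℝ)) := by rw [hsml]
              _ = β * ((∑ T ∈ P₁, (T.card:ℝ) * (S.card:ℝ) ^ (lam - 1))
                    + ∑ T ∈ P₂, (T.card:ℝ) * (S.card:ℝ) ^ (lam - 1)) := by
                  rw [hcards, ← Finset.sum_mul, ← Finset.sum_mul]
                  ring
              _ ≤ β * ((∑ T ∈ P₁, (T.card:ℝ) * (R * q ^ (k₁ T)))
                    + ∑ T ∈ P₂, (T.card:ℝ) * (R * q ^ (k₂ T))) := by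
                  apply mul_le_mul_of_nonneg_left (add_le_add h₁ h₂) hβ
              _ = β * R * (C₁ + C₂) := by
                  rw [hmulsum P₁ k₁, hmulsum P₂ k₂, hC₁, hC₂]
                  ring
          have hfin : B * R * (∑ T ∈ P₁ ∪ P₂, (T.card : ℝ) * (1 - q ^ (kf T)))
              = B * R * A₁ + B * R * A₂ + β * R * (C₁ + C₂) := by
            rw [hsplit]
            linear_combination (R * (C₁ + C₂)) * hBq
          calc ({e ∈ G.edgeSet | (∀ x ∈ e, x ∈ S) ∧
              ∀ T ∈ P₁ ∪ P₂, ¬ (∀ x ∈ e, x ∈ T)}.ncard : ℝ)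
              ≤ (E0.ncard : ℝ) + (E1.ncard : ℝ) + (E2.ncard : ℝ) := hncard
            _ ≤ β * (S.card : ℝ) ^ lam + B * R * A₁ + B * R * A₂ := by
                have := hcut
                have := hcut₁
                have := hcut₂
                linarith
            _ ≤ β * R * (C₁ + C₂) + B * R * A₁ + B * R * A₂ := by linarith
            _ = B * R * (∑ T ∈ P₁ ∪ P₂, (T.card : ℝ) * (1 - q ^ (kf T))) := by
                rw [hfin]; ring
  -- final assembly
  obtain ⟨P, k, hparts, hbU, hdisjP, -, hcut⟩ :=
    main (Fintype.card V) Finset.univ (le_of_eq Finset.card_univ)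
  refine ⟨⟨P, Finset.supIndep_iff_pairwiseDisjoint.mpr hdisjP,
    by rw [Finset.sup_eq_biUnion]; exact hbU, ?_⟩, ?_, ?_⟩
  · intro h
    obtain ⟨⟨x, hx⟩, -, -⟩ := hparts ⊥ h
    simp at hx
  · intro T hT
    exact (hparts T hT).2.1
  · have hEq : {e ∈ G.edgeSet | ∀ part ∈ P, ¬ (∀ x ∈ e, x ∈ part)}
        = {e ∈ G.edgeSet | (∀ x ∈ e, x ∈ (Finset.univ : Finset V)) ∧
            ∀ T ∈ P, ¬ (∀ x ∈ e, x ∈ T)} := by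
      ext e
      simp
    rw [hEq]
    have hsum_le : ∑ T ∈ P, (T.card : ℝ) * (1 - q ^ (k T)) ≤ ∑ T ∈ P, (T.card : ℝ) := by
      apply Finset.sum_le_sum
      intro T hT
      have h1 : 0 ≤ q ^ (k T) := pow_nonneg hq0.le _
      nlinarith [Nat.cast_nonneg (α := ℝ) T.card]
    have hsum_eq : ∑ T ∈ P, (T.card : ℝ) = (p : ℝ) := by
      rw [← hp, ← Finset.card_univ, ← hbU,
        Finset.card_biUnion (fun x hx y hy hxy => hdisjP hx hy hxy)]
      push_cast
      rfl
    have hal1 : α ^ lam ≤ 1 := Real.rpow_le_one hα0.le hα1.le hlam0.le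
    have hal0 : 0 < α ^ lam := Real.rpow_pos_of_pos hα0 _
    have hBle : B ≤ β / (α ^ lam * (1 - q)) := by
      have hc0 : 0 < α ^ lam * (1 - q) := mul_pos hal0 (by linarith)
      have hcb : α ^ lam * (1 - q) ≤ 1 - q := by nlinarith
      rw [hB]
      exact div_le_div_of_nonneg_left hβ hc0 hcb
    have hp0 : (0:ℝ) ≤ (p:ℝ) := Nat.cast_nonneg _
    calc ({e ∈ G.edgeSet | (∀ x ∈ e, x ∈ (Finset.univ : Finset V)) ∧
            ∀ T ∈ P, ¬ (∀ x ∈ e, x ∈ T)}.ncard : ℝ)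
        ≤ B * R * ∑ T ∈ P, (T.card : ℝ) * (1 - q ^ (k T)) := hcut
      _ ≤ B * R * (p : ℝ) := by
          apply mul_le_mul_of_nonneg_left _ (by positivity)
          rw [← hsum_eq]
          exact hsum_le
      _ ≤ β / (α ^ lam * (1 - q)) * p * R := by
          have h := mul_le_mul_of_nonneg_right
            (mul_le_mul_of_nonneg_right hBle hp0) hR0.le
          nlinarith [h]
end

section
/- Let q be a natural number, f : ℕ → ℝ a function, and 1/2 ≤ α < 1, β ≥ 0 real numbers. Let G be a simple graph on a finite vertex set V with |V| = p ≥ 2 and maximum vertex degree at most q. Suppose V is partitioned into three disjoint sets A, B, C such that no edge of G joins a vertex of A to a vertex of B, |A| ≤ αp, and |B| ≤ αp. Then there exists a partition of V into two disjoint sets A', B' such that 1 ≤ |A'|, 1 ≤ |B'|, |A'| ≤ max(2/3, α)·p, |B'| ≤ max(2/3, α)·p, and the number of edges of G with one endpoint in A' and the other in B' is at most q·|C|. -/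
/-- A vertex separator of a bounded-degree graph yields an edge separator: if `V = A ∪ B ∪ C`
with no edges between `A` and `B` and `|A|, |B| ≤ αp`, then `V` splits into two nonempty
parts `A'`, `B'` of size at most `max(2/3, α)·p` with at most `q·|C|` edges between them. -/
theorem vertex_separator_to_edge_separator {V : Type*} [Fintype V] [DecidableEq V]
    (G : SimpleGraph V) [DecidableRel G.Adj]
    (q : ℕ) (f : ℕ → ℝ) (α β : ℝ) (hα : 1 / 2 ≤ α) (hα1 : α < 1) (hβ : 0 ≤ β)
    (p : ℕ) (hp : Fintype.card V = p) (hp2 : 2 ≤ p)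
    (hdeg : ∀ w : V, G.degree w ≤ q)
    (A B C : Finset V)
    (hAB : Disjoint A B) (hAC : Disjoint A C) (hBC : Disjoint B C)
    (hcover : A ∪ B ∪ C = Finset.univ)
    (hnoedge : ∀ a ∈ A, ∀ b ∈ B, ¬ G.Adj a b)
    (hA : (A.card : ℝ) ≤ α * p) (hB : (B.card : ℝ) ≤ α * p) :
    ∃ A' B' : Finset V, Disjoint A' B' ∧ A' ∪ B' = Finset.univ ∧
      1 ≤ A'.card ∧ 1 ≤ B'.card ∧
      (A'.card : ℝ) ≤ max (2 / 3) α * p ∧ (B'.card : ℝ) ≤ max (2 / 3) α * p ∧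
      ((((A' ×ˢ B').filter fun e => G.Adj e.1 e.2).card : ℝ) ≤ q * C.card) := by
  classical
  set m := max (2 / 3 : ℝ) α with hm
  have hm23 : (2 / 3 : ℝ) ≤ m := le_max_left _ _
  have hmα : α ≤ m := le_max_right _ _
  have hm1 : m < 1 := max_lt (by norm_num) hα1
  have hpreal : (0 : ℝ) < p := by
    have : (2 : ℝ) ≤ p := by exact_mod_cast hp2
    linarith
  set t := ⌊m * p⌋₊ with ht
  have htle : (t : ℝ) ≤ m * p := Nat.floor_le (by nlinarith)
  have ht23 : (2 * p) / 3 ≤ t := by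
    apply Nat.le_floor
    calc ((((2 * p) / 3 : ℕ)) : ℝ) ≤ ((2 * p : ℕ) : ℝ) / 3 := Nat.cast_div_le
      _ = (2 / 3) * p := by push_cast; ring
      _ ≤ m * p := by nlinarith
  have htp : t < p := by
    have h1 : (t : ℝ) < p := lt_of_le_of_lt htle (by nlinarith)
    exact_mod_cast h1
  have hAt : A.card ≤ t := Nat.le_floor (le_trans hA (by nlinarith))
  have hBt : B.card ≤ t := Nat.le_floor (le_trans hB (by nlinarith))
  have hBp : B.card < p := by
    have h1 : (B.card : ℝ) < p := lt_of_le_of_lt hB (by nlinarith)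
    exact_mod_cast h1
  -- cardinality of the partition
  have hsum : A.card + B.card + C.card = p := by
    rw [← hp, ← Finset.card_univ, ← hcover,
      Finset.card_union_of_disjoint (by
        rw [Finset.disjoint_union_left]; exact ⟨hAC, hBC⟩),
      Finset.card_union_of_disjoint hAB]
  set k := min C.card (t - A.card) with hk
  obtain ⟨C₁, hC₁sub, hC₁card⟩ := Finset.exists_subset_card_eq (s := C) (n := k) (min_le_left _ _)
  set C₂ := C \ C₁ with hC₂
  have hC₂card : C₂.card = C.card - k := by rw [hC₂, Finset.card_sdiff_of_subset hC₁sub, hC₁card]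
  have hC₁C₂ : C₁ ∪ C₂ = C := Finset.union_sdiff_of_subset hC₁sub
  refine ⟨A ∪ C₁, B ∪ C₂, ?_, ?_, ?_, ?_, ?_, ?_, ?_⟩
  case _ =>
    -- disjoint
    rw [Finset.disjoint_union_left, Finset.disjoint_union_right, Finset.disjoint_union_right]
    refine ⟨⟨hAB, hAC.mono_right (Finset.sdiff_subset)⟩,
      ⟨(hBC.mono_right hC₁sub).symm, Finset.disjoint_sdiff⟩⟩
  case _ =>
    rw [← hcover]
    ext x
    simp only [Finset.mem_union, hC₂, Finset.mem_sdiff]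
    by_cases hx : x ∈ C₁ <;> by_cases hx2 : x ∈ C <;> [tauto; skip; tauto; tauto]
    exact absurd (hC₁sub hx) hx2
  all_goals (
    have hdisjA : Disjoint A C₁ := hAC.mono_right hC₁sub
    have hdisjB : Disjoint B C₂ := hBC.mono_right Finset.sdiff_subset
    have hA'card : (A ∪ C₁).card = A.card + k := by
      rw [Finset.card_union_of_disjoint hdisjA, hC₁card]
    have hB'card : (B ∪ C₂).card = B.card + (C.card - k) := by
      rw [Finset.card_union_of_disjoint hdisjB, hC₂card]
    have hp23 : p ≤ 2 * ((2 * p) / 3) := by omega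
    first
    | -- 1 ≤ (A ∪ C₁).card
      (rw [hA'card]; omega)
    | -- 1 ≤ (B ∪ C₂).card
      (rw [hB'card]; omega)
    | -- size bounds
      (refine le_trans ?_ htle
       have : (A ∪ C₁).card ≤ t ∧ (B ∪ C₂).card ≤ t := by omega
       first
       | (exact_mod_cast this.1)
       | (exact_mod_cast this.2))
    | -- edge bound
      skip)
  -- edge count
  have hsub : ((A ∪ C₁) ×ˢ (B ∪ C₂)).filter (fun e => G.Adj e.1 e.2) ⊆
      ((C₁ ×ˢ (Finset.univ : Finset V)).filter fun e => G.Adj e.1 e.2) ∪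
      (((Finset.univ : Finset V) ×ˢ C₂).filter fun e => G.Adj e.1 e.2) := by
    rintro ⟨x, y⟩ hxy
    simp only [Finset.mem_filter, Finset.mem_product, Finset.mem_union] at hxy ⊢
    obtain ⟨⟨hx, hy⟩, hadj⟩ := hxy
    rcases hx with hx | hx
    · rcases hy with hy | hy
      · exact absurd hadj (hnoedge x hx y hy)
      · exact Or.inr ⟨⟨Finset.mem_univ _, hy⟩, hadj⟩
    · exact Or.inl ⟨⟨hx, Finset.mem_univ _⟩, hadj⟩
  have hcount1 : ((C₁ ×ˢ (Finset.univ : Finset V)).filter fun e => G.Adj e.1 e.2).card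
      ≤ q * C₁.card := by
    calc ((C₁ ×ˢ (Finset.univ : Finset V)).filter fun e => G.Adj e.1 e.2).card
        ≤ (C₁.biUnion fun x => ({x} : Finset V) ×ˢ G.neighborFinset x).card := by
          apply Finset.card_le_card
          rintro ⟨x, y⟩ hxy
          simp only [Finset.mem_filter, Finset.mem_product, Finset.mem_univ,
            and_true, true_and] at hxy
          simp only [Finset.mem_biUnion, Finset.mem_product, Finset.mem_singleton,
            SimpleGraph.mem_neighborFinset]
          exact ⟨x, hxy.1, rfl, hxy.2⟩
      _ ≤ ∑ x ∈ C₁, (({x} : Finset V) ×ˢ G.neighborFinset x).card :=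
          Finset.card_biUnion_le
      _ = ∑ x ∈ C₁, G.degree x := Finset.sum_congr rfl fun x _ => by
          rw [Finset.card_product, Finset.card_singleton, one_mul,
            SimpleGraph.card_neighborFinset_eq_degree]
      _ ≤ ∑ _x ∈ C₁, q := Finset.sum_le_sum fun x _ => hdeg x
      _ = q * C₁.card := by rw [Finset.sum_const, smul_eq_mul, mul_comm]
  have hcount2 : (((Finset.univ : Finset V) ×ˢ C₂).filter fun e => G.Adj e.1 e.2).card
      ≤ q * C₂.card := by
    calc (((Finset.univ : Finset V) ×ˢ C₂).filter fun e => G.Adj e.1 e.2).card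
        ≤ (C₂.biUnion fun y => G.neighborFinset y ×ˢ ({y} : Finset V)).card := by
          apply Finset.card_le_card
          rintro ⟨x, y⟩ hxy
          simp only [Finset.mem_filter, Finset.mem_product, Finset.mem_univ,
            and_true, true_and] at hxy
          simp only [Finset.mem_biUnion, Finset.mem_product, Finset.mem_singleton,
            SimpleGraph.mem_neighborFinset]
          exact ⟨y, hxy.1, hxy.2.symm, rfl⟩
      _ ≤ ∑ y ∈ C₂, (G.neighborFinset y ×ˢ ({y} : Finset V)).card :=
          Finset.card_biUnion_le
      _ = ∑ y ∈ C₂, G.degree y := Finset.sum_congr rfl fun y _ => by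
          rw [Finset.card_product, Finset.card_singleton, mul_one,
            SimpleGraph.card_neighborFinset_eq_degree]
      _ ≤ ∑ _y ∈ C₂, q := Finset.sum_le_sum fun y _ => hdeg y
      _ = q * C₂.card := by rw [Finset.sum_const, smul_eq_mul, mul_comm]
  have htotal : (((A ∪ C₁) ×ˢ (B ∪ C₂)).filter fun e => G.Adj e.1 e.2).card ≤ q * C.card := by
    calc (((A ∪ C₁) ×ˢ (B ∪ C₂)).filter fun e => G.Adj e.1 e.2).card
        ≤ _ := Finset.card_le_card hsub
      _ ≤ _ := Finset.card_union_le _ _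
      _ ≤ q * C₁.card + q * C₂.card := Nat.add_le_add hcount1 hcount2
      _ = q * C.card := by
          rw [← Nat.mul_add]
          congr 1
          rw [hC₁card, hC₂card]
          omega
  exact_mod_cast htotal
end

section
/- Let c ≥ 1, q ≥ 1, b ≥ 0, r ≥ 1, k ≥ 2, L ≥ 0, M ≥ 1 be real numbers, t a natural number, and let p₁, …, p_t, s₁, …, s_t, u₁, …, u_t be real numbers satisfying: 1 ≤ pᵢ ≤ r for every i and p₁ + ⋯ + p_t ≤ L; 1 ≤ sᵢ ≤ q·k·r for every i and s₁ + ⋯ + s_t ≤ b·L / log₂ k; uᵢ ≥ 0 for every i and u₁ + ⋯ + u_t ≤ M. Then ∑_{i=1}^t (pᵢ + sᵢ + uᵢ)·(log₂ c + log₂(pᵢ + sᵢ + uᵢ)) ≤ L·log₂ r + (b·L / log₂ k)·log₂(q·k·r) + M·log₂ M + (log₂ c + 2)·(L + b·L / log₂ k + M). -/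
/-- Midpoint convexity of `t ↦ t * log₂ t` gives
`(a+b) log₂(a+b) ≤ a log₂ a + b log₂ b + (a+b)`. -/
lemma mul_log_add_le (a b : ℝ) (ha : 0 ≤ a) (hb : 0 ≤ b) :
    (a + b) * Real.logb 2 (a + b) ≤ a * Real.logb 2 a + b * Real.logb 2 b + (a + b) := by
  have h2 : (0:ℝ) < Real.log 2 := Real.log_pos one_lt_two
  have hconv := Real.convexOn_mul_log.2 (Set.mem_Ici.2 (by linarith : (0:ℝ) ≤ 2*a))
    (Set.mem_Ici.2 (by linarith : (0:ℝ) ≤ 2*b)) (by norm_num : (0:ℝ) ≤ 1/2)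
    (by norm_num : (0:ℝ) ≤ 1/2) (by norm_num)
  simp only [smul_eq_mul] at hconv
  have hmid : (1/2 : ℝ) * (2*a) + (1/2 : ℝ) * (2*b) = a + b := by ring
  rw [hmid] at hconv
  have hla : a * Real.log (2*a) = a * Real.log 2 + a * Real.log a := by
    rcases eq_or_lt_of_le ha with h | h
    · simp [← h]
    · rw [Real.log_mul two_ne_zero (ne_of_gt h)]; ring
  have hlb : b * Real.log (2*b) = b * Real.log 2 + b * Real.log b := by
    rcases eq_or_lt_of_le hb with h | h
    · simp [← h]
    · rw [Real.log_mul two_ne_zero (ne_of_gt h)]; ring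
  have hlog : (a+b) * Real.log (a+b) ≤ a * Real.log a + b * Real.log b + (a+b) * Real.log 2 := by
    nlinarith [hconv]
  simp only [Real.logb]
  calc (a+b) * (Real.log (a+b) / Real.log 2) = ((a+b) * Real.log (a+b)) / Real.log 2 := by ring
    _ ≤ (a * Real.log a + b * Real.log b + (a+b) * Real.log 2) / Real.log 2 := by
        exact div_le_div_of_nonneg_right hlog h2.le
    _ = a * (Real.log a / Real.log 2) + b * (Real.log b / Real.log 2) + (a+b) := by
        field_simp

/-- The arithmetic core of the bound on the number of Boolean operators computable in
the fragments of an `r^λ`-partition (lemma 5 of the paper). -/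
theorem fragments_entropy_bound (c q b r k L M : ℝ)
    (hc : 1 ≤ c) (hq : 1 ≤ q) (hb : 0 ≤ b) (hr : 1 ≤ r) (hk : 2 ≤ k)
    (hL : 0 ≤ L) (hM : 1 ≤ M) (t : ℕ) (p s u : Fin t → ℝ)
    (hp1 : ∀ i, 1 ≤ p i) (hpr : ∀ i, p i ≤ r) (hpL : ∑ i, p i ≤ L)
    (hs1 : ∀ i, 1 ≤ s i) (hsqkr : ∀ i, s i ≤ q * k * r)
    (hsS : ∑ i, s i ≤ b * L / Real.logb 2 k)
    (hu0 : ∀ i, 0 ≤ u i) (huM : ∑ i, u i ≤ M) :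
    ∑ i, (p i + s i + u i) * (Real.logb 2 c + Real.logb 2 (p i + s i + u i)) ≤
      L * Real.logb 2 r + (b * L / Real.logb 2 k) * Real.logb 2 (q * k * r) +
        M * Real.logb 2 M + (Real.logb 2 c + 2) * (L + b * L / Real.logb 2 k + M) := by
  set S : ℝ := b * L / Real.logb 2 k with hSdef
  have hlogk : 0 < Real.logb 2 k := Real.logb_pos one_lt_two (by linarith)
  have hS0 : 0 ≤ S := div_nonneg (mul_nonneg hb hL) hlogk.le
  have hlogc : 0 ≤ Real.logb 2 c := Real.logb_nonneg one_lt_two hc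
  have hlogr : 0 ≤ Real.logb 2 r := Real.logb_nonneg one_lt_two hr
  have hlogqkr : 0 ≤ Real.logb 2 (q*k*r) := Real.logb_nonneg one_lt_two (by nlinarith [mul_le_mul hq hk (by norm_num : (0:ℝ) ≤ 2) (by linarith : (0:ℝ) ≤ q)])
  have hlogM : 0 ≤ Real.logb 2 M := Real.logb_nonneg one_lt_two hM
  have huM' : ∀ i, u i ≤ M := fun i =>
    le_trans (Finset.single_le_sum (fun j _ => hu0 j) (Finset.mem_univ i)) huM
  have hkey : ∀ i ∈ Finset.univ,
      (p i + s i + u i) * (Real.logb 2 c + Real.logb 2 (p i + s i + u i)) ≤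
      (p i + s i + u i) * Real.logb 2 c + (p i * Real.logb 2 r + s i * Real.logb 2 (q*k*r)
        + u i * Real.logb 2 M + 2*(p i + s i + u i)) := by
    intro i _
    have hp0 : (0:ℝ) < p i := lt_of_lt_of_le one_pos (hp1 i)
    have hs0 : (0:ℝ) < s i := lt_of_lt_of_le one_pos (hs1 i)
    have h1 := mul_log_add_le (p i + s i) (u i) (by linarith) (hu0 i)
    have h2' := mul_log_add_le (p i) (s i) hp0.le hs0.le
    have hpb : p i * Real.logb 2 (p i) ≤ p i * Real.logb 2 r :=
      mul_le_mul_of_nonneg_left (Real.logb_le_logb_of_le one_lt_two hp0 (hpr i)) hp0.le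
    have hsb : s i * Real.logb 2 (s i) ≤ s i * Real.logb 2 (q*k*r) :=
      mul_le_mul_of_nonneg_left (Real.logb_le_logb_of_le one_lt_two hs0 (hsqkr i)) hs0.le
    have hub : u i * Real.logb 2 (u i) ≤ u i * Real.logb 2 M := by
      rcases eq_or_lt_of_le (hu0 i) with h | h
      · simp [← h]
      · exact mul_le_mul_of_nonneg_left (Real.logb_le_logb_of_le one_lt_two h (huM' i)) h.le
    have hexp : (p i + s i + u i) * (Real.logb 2 c + Real.logb 2 (p i + s i + u i))
        = (p i + s i + u i) * Real.logb 2 c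
          + (p i + s i + u i) * Real.logb 2 (p i + s i + u i) := by ring
    rw [hexp]
    have hrw : p i + s i + u i = (p i + s i) + u i := by ring
    linarith [h1, h2', hpb, hsb, hub, hu0 i]
  refine le_trans (Finset.sum_le_sum hkey) ?_
  have hsum : ∑ i, ((p i + s i + u i) * Real.logb 2 c + (p i * Real.logb 2 r
        + s i * Real.logb 2 (q*k*r) + u i * Real.logb 2 M + 2*(p i + s i + u i)))
      = (∑ i, p i + ∑ i, s i + ∑ i, u i) * Real.logb 2 c + ((∑ i, p i) * Real.logb 2 r
        + (∑ i, s i) * Real.logb 2 (q*k*r) + (∑ i, u i) * Real.logb 2 M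
        + 2*(∑ i, p i + ∑ i, s i + ∑ i, u i)) := by
    simp only [add_mul, mul_add, Finset.sum_add_distrib, ← Finset.sum_mul, ← Finset.mul_sum]
    try ring
  rw [hsum]
  have hP0 : 0 ≤ ∑ i, p i := Finset.sum_nonneg fun i _ => by linarith [hp1 i]
  have hQ0 : 0 ≤ ∑ i, s i := Finset.sum_nonneg fun i _ => by linarith [hs1 i]
  have hU0 : 0 ≤ ∑ i, u i := Finset.sum_nonneg fun i _ => hu0 i
  have hM0 : 0 ≤ M := by linarith
  nlinarith [mul_le_mul_of_nonneg_right hpL hlogr,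
    mul_le_mul_of_nonneg_right hsS hlogqkr,
    mul_le_mul_of_nonneg_right huM hlogM,
    mul_le_mul_of_nonneg_right (show (∑ i, p i) + (∑ i, s i) + (∑ i, u i) ≤ L + S + M by
      linarith) hlogc]
end

section
/- Let d ≥ 1 be a natural number and c_e > 0 a real number. Let G be a simple graph on a finite vertex set V and let v : V → ℝ^d be a placement of its vertices into d-dimensional Euclidean space such that dist(v(i), v(j)) ≥ 1 for all distinct vertices i, j, and dist(v(i), v(j)) ≤ c_e whenever {i, j} is an edge of G. Then the degree of every vertex of G is at most (2c_e + 1)^d. -/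
/-- A `d`-dimensional graph with parameter `c_e` (vertices placed in `ℝ^d` with pairwise
distances at least `1` and edges of length at most `c_e`) has all vertex degrees
bounded by `(2c_e + 1)^d`. -/
theorem degree_of_d_dimensional_graph_le {V : Type*} [Fintype V]
    (d : ℕ) (hd : 1 ≤ d) (ce : ℝ) (hce : 0 < ce)
    (G : SimpleGraph V) [DecidableRel G.Adj]
    (v : V → EuclideanSpace ℝ (Fin d))
    (hsep : ∀ i j : V, i ≠ j → 1 ≤ dist (v i) (v j))
    (hedge : ∀ i j : V, G.Adj i j → dist (v i) (v j) ≤ ce) :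
    ∀ i : V, (G.degree i : ℝ) ≤ (2 * ce + 1) ^ d := by
  intro i
  classical
  have : Nonempty (Fin d) := ⟨⟨0, hd⟩⟩
  have hfr0 : Module.finrank ℝ (EuclideanSpace ℝ (Fin d)) = d := by
    simp [finrank_euclideanSpace]
  have : Nontrivial (EuclideanSpace ℝ (Fin d)) :=
    Module.nontrivial_of_finrank_pos (R := ℝ) (by omega)
  set μ : MeasureTheory.Measure (EuclideanSpace ℝ (Fin d)) := MeasureTheory.volume
  set S := G.neighborFinset i with hS
  -- the balls of radius 1/2 around neighbors are pairwise disjoint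
  have hdisj : (S : Set V).PairwiseDisjoint (fun j => Metric.ball (v j) (1/2)) := by
    intro a _ b _ hab
    apply Metric.ball_disjoint_ball
    calc (1/2 : ℝ) + 1/2 = 1 := by norm_num
    _ ≤ dist (v a) (v b) := hsep a b hab
  -- each such ball is inside the ball of radius ce + 1/2 around v i
  have hsub : ∀ j ∈ S, Metric.ball (v j) (1/2) ⊆ Metric.ball (v i) (ce + 1/2) := by
    intro j hj x hx
    have hadj : G.Adj i j := by rwa [hS, SimpleGraph.mem_neighborFinset] at hj
    have h1 : dist (v j) (v i) ≤ ce := by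
      rw [dist_comm]; exact hedge i j hadj
    have h2 : dist x (v j) < 1/2 := hx
    calc dist x (v i) ≤ dist x (v j) + dist (v j) (v i) := dist_triangle _ _ _
      _ < 1/2 + ce := by linarith
      _ = ce + 1/2 := by ring
  have hμsum : ∑ j ∈ S, μ (Metric.ball (v j) (1/2)) ≤ μ (Metric.ball (v i) (ce + 1/2)) := by
    rw [← MeasureTheory.measure_biUnion_finset hdisj (fun j _ => measurableSet_ball)]
    exact MeasureTheory.measure_mono (Set.iUnion₂_subset hsub)
  have hfr := hfr0
  have hball : ∀ (x : EuclideanSpace ℝ (Fin d)) (r : ℝ), 0 ≤ r →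
      μ (Metric.ball x r) = ENNReal.ofReal (r ^ d) * μ (Metric.ball 0 1) := by
    intro x r hr
    rw [MeasureTheory.Measure.addHaar_ball μ x hr, hfr]
  set B := μ (Metric.ball (0 : EuclideanSpace ℝ (Fin d)) 1) with hB
  have hB0 : B ≠ 0 := (Metric.measure_ball_pos μ 0 one_pos).ne'
  have hBtop : B ≠ ⊤ := MeasureTheory.measure_ball_lt_top.ne
  have key : (S.card : ENNReal) * ENNReal.ofReal ((1/2 : ℝ) ^ d) * B
      ≤ ENNReal.ofReal ((ce + 1/2) ^ d) * B := by
    calc (S.card : ENNReal) * ENNReal.ofReal ((1/2 : ℝ) ^ d) * B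
        = ∑ j ∈ S, μ (Metric.ball (v j) (1/2)) := by
          rw [Finset.sum_congr rfl (fun j _ => hball (v j) (1/2) (by norm_num)),
            Finset.sum_const, nsmul_eq_mul, mul_assoc]
      _ ≤ μ (Metric.ball (v i) (ce + 1/2)) := hμsum
      _ = ENNReal.ofReal ((ce + 1/2) ^ d) * B := hball (v i) _ (by positivity)
  have key2 : (S.card : ENNReal) * ENNReal.ofReal ((1/2 : ℝ) ^ d)
      ≤ ENNReal.ofReal ((ce + 1/2) ^ d) :=
    (ENNReal.mul_le_mul_iff_left hB0 hBtop).mp key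
  have hreal : (S.card : ℝ) * (1/2 : ℝ) ^ d ≤ (ce + 1/2) ^ d := by
    rw [← ENNReal.ofReal_le_ofReal_iff (by positivity), ENNReal.ofReal_mul (by positivity),
      ENNReal.ofReal_natCast]
    exact key2
  have hdeg : (G.degree i : ℝ) = (S.card : ℝ) := by
    rw [hS, SimpleGraph.card_neighborFinset_eq_degree]
  rw [hdeg]
  have hpow : (2 * ce + 1) ^ d * (1/2 : ℝ) ^ d = (ce + 1/2) ^ d := by
    rw [← mul_pow]; ring_nf
  have hp : (0:ℝ) < (1/2:ℝ) ^ d := by positivity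
  nlinarith [hreal, hpow, hp]
end

section
/- For every natural number d ≥ 1 and every real number c > 0, there is no function f from finite binary strings (List Bool) to d-dimensional Euclidean space ℝ^d such that dist(f(u), f(w)) ≥ 1 for all distinct strings u, w, and dist(f(l), f(b :: l)) ≤ c for every string l and every bit b. In other words, the infinite binary tree is not a d-dimensional graph for any d and any parameter c. -/
open Metric MeasureTheory Filter

/-- The infinite binary tree is not a `d`-dimensional graph for any `d ≥ 1` and any
parameter `c > 0`: there is no placement of the finite binary strings in `ℝ^d` with
pairwise distances at least `1` in which every tree edge has length at most `c`. -/
theorem binary_tree_not_d_dimensional (d : ℕ) (hd : 1 ≤ d) (c : ℝ) (hc : 0 < c) :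
    ¬ ∃ f : List Bool → EuclideanSpace ℝ (Fin d),
        (∀ u w : List Bool, u ≠ w → 1 ≤ dist (f u) (f w)) ∧
        (∀ (l : List Bool) (b : Bool), dist (f l) (f (b :: l)) ≤ c) := by
  rintro ⟨f, h1, h2⟩
  haveI : Nontrivial (EuclideanSpace ℝ (Fin d)) := by
    apply Module.nontrivial_of_finrank_pos (R := ℝ)
    simp [finrank_euclideanSpace]; omega
  -- distance to root
  have hroot : ∀ l : List Bool, dist (f []) (f l) ≤ c * l.length := by
    intro l
    induction l with
    | nil => simp
    | cons b l ih =>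
      have := h2 l b
      have tri := dist_triangle (f []) (f l) (f (b :: l))
      simp only [List.length_cons]
      push_cast
      linarith
  -- choose n
  have hlo := (isLittleO_pow_const_const_pow_of_one_lt (R := ℝ) d (by norm_num : (1:ℝ) < 2)).bound
    (show (0:ℝ) < 1 / (2 * (2*c+2)^d) by positivity)
  obtain ⟨n, hn1, hnlo⟩ := ((eventually_ge_atTop 1).and hlo).exists
  have hRn : (2 * ↑n * c + 2 : ℝ) ^ d < 2 ^ n := by
    have h0 : (0:ℝ) < (2*c+2)^d := by positivity
    have h1' : (2 * ↑n * c + 2 : ℝ) ≤ (2*c+2) * n := by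
      have : (1:ℝ) ≤ n := by exact_mod_cast hn1
      nlinarith
    have h2' : (2 * ↑n * c + 2 : ℝ) ^ d ≤ ((2*c+2) * n) ^ d := by
      apply pow_le_pow_left₀ (by positivity) h1'
    rw [mul_pow] at h2'
    rw [Real.norm_of_nonneg (by positivity), Real.norm_of_nonneg (by positivity)] at hnlo
    have hn' := hnlo
    have h2pos : (0:ℝ) < 2 ^ n := by positivity
    calc (2 * ↑n * c + 2 : ℝ) ^ d ≤ (2*c+2)^d * (n:ℝ)^d := h2'
      _ ≤ (2*c+2)^d * (1 / (2 * (2*c+2)^d) * 2^n) := by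
          apply mul_le_mul_of_nonneg_left hn' h0.le
      _ = 2^n / 2 := by field_simp
      _ < 2^n := by linarith
  -- the finset of strings of length n
  set T : Finset (List Bool) := Finset.univ.image (fun g : Fin n → Bool => List.ofFn g) with hT
  have hTcard : T.card = 2 ^ n := by
    rw [hT, Finset.card_image_of_injective _ List.ofFn_injective, Finset.card_univ]
    simp [Fintype.card_fun]
  have hTlen : ∀ l ∈ T, l.length = n := by
    intro l hl
    rw [hT, Finset.mem_image] at hl
    obtain ⟨g, _, rfl⟩ := hl
    simp
  -- balls
  set μ : Measure (EuclideanSpace ℝ (Fin d)) := volume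
  have hdisj : (T : Set (List Bool)).PairwiseDisjoint
      (fun l => ball (f l) (1/2)) := by
    intro u hu w hw huw
    apply ball_disjoint_ball
    have := h1 u w huw
    linarith
  have hsub : ∀ l ∈ T, ball (f l) (1/2) ⊆ ball (f []) (↑n * c + 1) := by
    intro l hl x hx
    rw [mem_ball] at hx ⊢
    have h3 := hroot l
    rw [hTlen l hl] at h3
    have := dist_triangle x (f l) (f [])
    rw [dist_comm (f l) (f [])] at this
    linarith
  have hmeas : ∀ l ∈ T, MeasurableSet (ball (f l) (1/2)) := fun l _ => measurableSet_ball
  have hunion : μ (⋃ l ∈ T, ball (f l) (1/2)) = ∑ l ∈ T, μ (ball (f l) (1/2)) :=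
    measure_biUnion_finset hdisj hmeas
  have hle : ∑ l ∈ T, μ (ball (f l) (1/2)) ≤ μ (ball (f []) (↑n * c + 1)) := by
    rw [← hunion]
    exact measure_mono (Set.iUnion₂_subset hsub)
  rw [Finset.sum_congr rfl (fun l _ => Measure.addHaar_ball μ (f l) (by norm_num : (0:ℝ) ≤ 1/2)),
    Finset.sum_const, Measure.addHaar_ball μ (f []) (by positivity : (0:ℝ) ≤ ↑n * c + 1)] at hle
  have hV0 : μ (ball (0 : EuclideanSpace ℝ (Fin d)) 1) ≠ 0 :=
    (measure_ball_pos μ 0 one_pos).ne'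
  have hVtop : μ (ball (0 : EuclideanSpace ℝ (Fin d)) 1) ≠ ⊤ := measure_ball_lt_top.ne
  rw [hTcard, finrank_euclideanSpace, Fintype.card_fin] at hle
  -- cancel V
  rw [nsmul_eq_mul, ← mul_assoc] at hle
  push_cast at hle
  have hle2 : (2^n : ENNReal) * ENNReal.ofReal ((1/2)^d) ≤ ENNReal.ofReal ((↑n * c + 1)^d) :=
    (ENNReal.mul_le_mul_iff_left hV0 hVtop).mp hle
  -- back to reals
  have hreal : (2^n : ℝ) * (1/2)^d ≤ (↑n * c + 1)^d := by
    have h2 : ((2:ENNReal)^n * ENNReal.ofReal ((1/2)^d)) =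
        ENNReal.ofReal (2^n * (1/2)^d) := by
      rw [ENNReal.ofReal_mul (by positivity)]
      congr 1
      rw [ENNReal.ofReal_pow (by norm_num), ENNReal.ofReal_ofNat]
    rw [h2] at hle2
    exact (ENNReal.ofReal_le_ofReal_iff (by positivity)).mp hle2
  have : (2:ℝ)^n ≤ (2 * ↑n * c + 2)^d := by
    have h12 : ((1:ℝ)/2)^d = 1/2^d := by rw [div_pow, one_pow]
    rw [h12] at hreal
    have : (2 * ↑n * c + 2 : ℝ)^d = 2^d * (↑n * c + 1)^d := by
      rw [← mul_pow]; ring_nf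
    rw [this]
    have h2d : (0:ℝ) < 2^d := by positivity
    calc (2:ℝ)^n = 2^d * (2^n * (1/2^d)) := by field_simp
      _ ≤ 2^d * (↑n * c + 1)^d := by nlinarith
  linarith
end
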